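/- arXiv:0704.0600 — 4 statements merged into one kernel-verified Lean document; each statement's English description precedes it below -/
import Mathlib

section
/- Let W ⊆ ℚ^n be a nontrivial cone (W ≠ {0}, W is closed under addition, and α·w ∈ W for every rational α ≥ 0 and every w ∈ W) with the property that for every two vectors a = (a_1,…,a_n), b = (b_1,…,b_n) ∈ W there exist coordinates 1 ≤ i < j ≤ n (depending on a, b) such that a_i·b_j − a_j·b_i = 0. Then there exist two coordinates i < j such that the projection of W onto the coordinates (i,j) spans a ℚ-subspace of ℚ² of dimension at most 1. -/
/-- Choosing nonnegative `s, t` avoiding the zero sets of finitely many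
bilinear functions, each of which has nonzero constant or `s*t` coefficient. -/
lemma exists_st_aux {ι : Type*} (S : Finset ι) (c d e f : ι → ℚ)
    (h : ∀ q ∈ S, c q ≠ 0 ∨ f q ≠ 0) :
    ∃ s t : ℚ, 0 ≤ s ∧ 0 ≤ t ∧
      ∀ q ∈ S, c q + s * d q + t * e q + s * t * f q ≠ 0 := by
  have hIci : (Set.Ici (0:ℚ)).Infinite := Set.Ici_infinite 0
  -- step 1 : choose s
  have hBad : ∀ q ∈ S, {s : ℚ | c q + s * d q = 0 ∧ e q + s * f q = 0} ⊆
      ({-(c q)/(d q), -(e q)/(f q)} : Set ℚ) := by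
    intro q hq s hs
    obtain ⟨h1, h2⟩ := hs
    rcases eq_or_ne (d q) 0 with hd | hd
    · have hc : c q = 0 := by simpa [hd] using h1
      have hf : f q ≠ 0 := (h q hq).resolve_left (by simp [hc])
      right
      have : s = -(e q) / (f q) := by field_simp; linarith
      simp [this]
    · left
      have : s = -(c q) / (d q) := by field_simp; linarith
      simp [this]
  have hFin : (⋃ q ∈ S, {s : ℚ | c q + s * d q = 0 ∧ e q + s * f q = 0}).Finite :=
    Set.Finite.biUnion S.finite_toSet fun q hq =>
      ((Set.finite_singleton _).insert _).subset (hBad q hq)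
  obtain ⟨s, hs⟩ := (hIci.diff hFin).nonempty
  have hs0 : (0:ℚ) ≤ s := hs.1
  have hsgood : ∀ q ∈ S, c q + s * d q ≠ 0 ∨ e q + s * f q ≠ 0 := by
    intro q hq
    by_contra hcon
    push_neg at hcon
    exact hs.2 (Set.mem_biUnion hq ⟨hcon.1, hcon.2⟩)
  -- step 2 : choose t
  have hBad2 : ∀ q ∈ S, {t : ℚ | (c q + s * d q) + t * (e q + s * f q) = 0} ⊆
      ({-(c q + s * d q)/(e q + s * f q)} : Set ℚ) := by
    intro q hq t ht
    simp only [Set.mem_setOf_eq] at ht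
    rcases eq_or_ne (e q + s * f q) 0 with hB | hB
    · exfalso
      have : c q + s * d q = 0 := by rw [hB] at ht; simpa using ht
      exact ((hsgood q hq).resolve_right (by simp [hB])) this
    · have : t = -(c q + s * d q)/(e q + s * f q) := by field_simp; linarith
      simp [this]
  have hFin2 : (⋃ q ∈ S, {t : ℚ | (c q + s * d q) + t * (e q + s * f q) = 0}).Finite :=
    Set.Finite.biUnion S.finite_toSet fun q hq =>
      (Set.finite_singleton _).subset (hBad2 q hq)
  obtain ⟨t, ht⟩ := (hIci.diff hFin2).nonempty
  refine ⟨s, t, hs0, ht.1, ?_⟩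
  intro q hq hzero
  apply ht.2
  apply Set.mem_biUnion hq
  show (c q + s * d q) + t * (e q + s * f q) = 0
  linarith [hzero]

/-- Key lemma: if for every pair in `S` there are witnesses in the cone with
nonvanishing determinant, then there are two vectors in the cone with
determinant nonvanishing at every pair of `S` simultaneously. -/
lemma key_lemma {n : ℕ} (W : Set (Fin n → ℚ))
    (hadd : ∀ w₁ ∈ W, ∀ w₂ ∈ W, w₁ + w₂ ∈ W)
    (hsmul : ∀ (α : ℚ), 0 ≤ α → ∀ w ∈ W, α • w ∈ W)
    (hW : W.Nonempty)
    (S : Finset (Fin n × Fin n))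
    (hwit : ∀ p ∈ S, ∃ a ∈ W, ∃ b ∈ W, a p.1 * b p.2 - a p.2 * b p.1 ≠ 0) :
    ∃ u ∈ W, ∃ v ∈ W, ∀ p ∈ S, u p.1 * v p.2 - u p.2 * v p.1 ≠ 0 := by
  classical
  induction S using Finset.induction_on with
  | empty =>
    obtain ⟨w, hw⟩ := hW
    exact ⟨w, hw, w, hw, by simp⟩
  | @insert p S hp ih =>
    obtain ⟨a, ha, b, hb, hab⟩ := hwit p (Finset.mem_insert_self p S)
    obtain ⟨u, hu, v, hv, huv⟩ := ih fun q hq => hwit q (Finset.mem_insert_of_mem hq)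
    obtain ⟨s, t, hs, ht, hst⟩ := exists_st_aux (insert p S)
      (fun q => u q.1 * v q.2 - u q.2 * v q.1)
      (fun q => a q.1 * v q.2 - a q.2 * v q.1)
      (fun q => u q.1 * b q.2 - u q.2 * b q.1)
      (fun q => a q.1 * b q.2 - a q.2 * b q.1)
      (by
        intro q hq
        rcases Finset.mem_insert.mp hq with h | h
        · subst h; exact Or.inr hab
        · exact Or.inl (huv q h))
    refine ⟨u + s • a, hadd u hu _ (hsmul s hs a ha),
            v + t • b, hadd v hv _ (hsmul t ht b hb), ?_⟩
    intro q hq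
    have hne := hst q hq
    simp only [Pi.add_apply, Pi.smul_apply, smul_eq_mul]
    intro hzero
    exact hne (by linear_combination hzero)

/-- If all determinants at the pair (i,j) vanish on W, the projection spans
a subspace of dimension at most 1. -/
lemma proj_rank_le_one {n : ℕ} (W : Set (Fin n → ℚ)) (i j : Fin n)
    (h : ∀ a ∈ W, ∀ b ∈ W, a i * b j - a j * b i = 0) :
    Module.finrank ℚ
      (Submodule.span ℚ ((fun w : Fin n → ℚ => (w i, w j)) '' W)) ≤ 1 := by
  by_cases hz : ∀ w ∈ W, w i = 0 ∧ w j = 0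
  · have hsub : (fun w : Fin n → ℚ => (w i, w j)) '' W ⊆ ({0} : Set (ℚ × ℚ)) := by
      rintro _ ⟨w, hw, rfl⟩
      simp [Prod.ext_iff, (hz w hw).1, (hz w hw).2]
    have : Submodule.span ℚ ((fun w : Fin n → ℚ => (w i, w j)) '' W) = ⊥ := by
      rw [← le_bot_iff]
      exact Submodule.span_le.mpr (by simpa using hsub)
    rw [this, finrank_bot]
    exact zero_le_one
  · push_neg at hz
    obtain ⟨a, haW, hane⟩ := hz
    set v : ℚ × ℚ := (a i, a j) with hv_def
    have hv : v ≠ 0 := by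
      simp only [hv_def, Prod.ext_iff, Prod.fst_zero, Prod.snd_zero, ne_eq, not_and_or]
      by_cases hai : a i = 0
      · exact Or.inr (hane hai)
      · exact Or.inl hai
    have hsub : (fun w : Fin n → ℚ => (w i, w j)) '' W ⊆ ↑(Submodule.span ℚ ({v} : Set (ℚ × ℚ))) := by
      rintro _ ⟨b, hbW, rfl⟩
      rw [SetLike.mem_coe, Submodule.mem_span_singleton]
      have hD := h a haW b hbW
      by_cases hai : a i = 0
      · have haj : a j ≠ 0 := hane hai
        have hbi : b i = 0 := by
          have : a j * b i = 0 := by rw [hai] at hD; linarith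
          rcases mul_eq_zero.mp this with h' | h'
          · exact absurd h' haj
          · exact h'
        refine ⟨b j / a j, ?_⟩
        simp only [hv_def, Prod.smul_mk, smul_eq_mul, Prod.mk.injEq]
        constructor
        · rw [hai, hbi]; ring
        · field_simp
      · refine ⟨b i / a i, ?_⟩
        simp only [hv_def, Prod.smul_mk, smul_eq_mul, Prod.mk.injEq]
        constructor
        · field_simp
        · field_simp
          linarith [hD]
    have hle : Submodule.span ℚ ((fun w : Fin n → ℚ => (w i, w j)) '' W) ≤
        Submodule.span ℚ ({v} : Set (ℚ × ℚ)) := Submodule.span_le.mpr hsub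
    calc Module.finrank ℚ (Submodule.span ℚ ((fun w : Fin n → ℚ => (w i, w j)) '' W))
        ≤ Module.finrank ℚ (Submodule.span ℚ ({v} : Set (ℚ × ℚ))) :=
          Submodule.finrank_mono hle
      _ = 1 := finrank_span_singleton hv

/-- If W is a nontrivial cone in ℚ^n such that any two of its vectors have two
coordinates where the corresponding 2×2 determinant vanishes, then some
projection of W onto a pair of coordinates spans a subspace of dimension ≤ 1. -/
theorem cone_with_dependent_pairs_has_degenerate_projection
    {n : ℕ} (W : Set (Fin n → ℚ))
    (hW : W.Nonempty) (hnt : W ≠ {0})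
    (hadd : ∀ w₁ ∈ W, ∀ w₂ ∈ W, w₁ + w₂ ∈ W)
    (hsmul : ∀ (α : ℚ), 0 ≤ α → ∀ w ∈ W, α • w ∈ W)
    (hdet : ∀ a ∈ W, ∀ b ∈ W, ∃ i j : Fin n, i < j ∧
      a i * b j - a j * b i = 0) :
    ∃ i j : Fin n, i < j ∧
      Module.finrank ℚ
        (Submodule.span ℚ ((fun w : Fin n → ℚ => (w i, w j)) '' W)) ≤ 1 := by
  by_contra hcon
  push_neg at hcon
  classical
  have hwit : ∀ p ∈ Finset.univ.filter (fun p : Fin n × Fin n => p.1 < p.2),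
      ∃ a ∈ W, ∃ b ∈ W, a p.1 * b p.2 - a p.2 * b p.1 ≠ 0 := by
    intro p hpS
    have hplt : p.1 < p.2 := (Finset.mem_filter.mp hpS).2
    by_contra hno
    push_neg at hno
    have h1 := proj_rank_le_one W p.1 p.2 hno
    have h2 := hcon p.1 p.2 hplt
    exact absurd h1 h2.not_ge
  obtain ⟨u, hu, v, hv, hgood⟩ := key_lemma W hadd hsmul hW _ hwit
  obtain ⟨i, j, hij, hDij⟩ := hdet u hu v hv
  exact hgood (i, j) (Finset.mem_filter.mpr ⟨Finset.mem_univ _, hij⟩) hDij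
end

section
/- Let A ⊆ ℕ and define χ_A(n) = 2·1_A(n) − 1. Then A is a normal set if and only if for every k ≥ 0 and all integers 0 < i_1 < i_2 < … < i_k one has lim_{N→∞} (1/N)·Σ_{n=1}^{N} χ_A(n)·χ_A(n+i_1)·…·χ_A(n+i_k) = 0. -/
open Filter Topology

noncomputable section

open scoped Classical

/-- A ⊆ ℕ is a normal set: every binary word w of length k occurs in the
indicator sequence of A with asymptotic frequency 2^(-k). -/
def IsNormalSet (A : Set ℕ) : Prop :=
  ∀ k : ℕ, 1 ≤ k → ∀ w : Fin k → Bool,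
    Tendsto (fun N : ℕ =>
        (((Finset.Icc 1 N).filter
            (fun n => ∀ i : Fin k, ((n + (i : ℕ)) ∈ A ↔ w i = true))).card : ℝ) / N)
      atTop (nhds (1 / 2 ^ k))

/-- χ_A(n) = 2·1_A(n) − 1. -/
def chi (A : Set ℕ) : ℕ → ℝ := fun n => if n ∈ A then 1 else -1

/-!
With `s(b) = ±1` the sign of a bit, `1[x = b] = (1 + s(b) χ(x)) / 2`. Expanding the product of
these factors over the `k` positions of a word writes the frequency of the word as `2⁻ᵏ` times a
signed sum of Cesàro averages of `∏_{x ∈ S} χ_A(n + x)` over the subsets `S ⊆ {0, …, k - 1}`;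
the empty set contributes `2⁻ᵏ` and, if correlations vanish, all other terms tend to `0`.
Conversely such a product with `S ⊆ {0, …, L - 1}` is a signed combination of the indicators
of the `2ᴸ` words of length `L`, and the signs sum to `0`. Cesàro averages are invariant under
shifts, so it suffices to treat sets `S = {0, i₁, …, iₖ}`.
-/

open Finset

def cesaroMean (f : ℕ → ℝ) (N : ℕ) : ℝ := 1 / (N : ℝ) * ∑ n ∈ Icc 1 N, f n

theorem sum_Icc_one_comp_add {M : Type*} [AddCommGroup M] (f : ℕ → M) (m N : ℕ) :
    ∑ n ∈ Icc 1 N, f (n + m) = ∑ n ∈ Icc 1 (N + m), f n - ∑ n ∈ Icc 1 m, f n := by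
  have hshift : ∑ n ∈ Icc 1 N, f (n + m) = ∑ n ∈ Icc (1 + m) (N + m), f n := by
    rw [← map_add_right_Icc, sum_map]
    rfl
  rw [eq_sub_iff_add_eq', hshift, Nat.add_comm 1 m, Icc_add_one_left_eq_Ioc, ← Nat.zero_add 1,
    Icc_add_one_left_eq_Ioc, Icc_add_one_left_eq_Ioc,
    sum_Ioc_consecutive _ m.zero_le (Nat.le_add_left m N)]

theorem cesaroMean_comp_add (f : ℕ → ℝ) (m : ℕ) {N : ℕ} (hN : N ≠ 0) :
    cesaroMean (fun n => f (n + m)) N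
      = (N + m) / N * cesaroMean f (N + m) - (∑ n ∈ Icc 1 m, f n) / N := by
  have : (N + m : ℝ) ≠ 0 := by positivity
  simp only [cesaroMean, sum_Icc_one_comp_add, Nat.cast_add]
  field_simp

theorem tendsto_cesaroMean_comp_add {f : ℕ → ℝ} {l : ℝ}
    (h : Tendsto (cesaroMean f) atTop (𝓝 l)) (m : ℕ) :
    Tendsto (cesaroMean fun n => f (n + m)) atTop (𝓝 l) := by
  have hratio : Tendsto (fun N : ℕ => ((N : ℝ) + m) / N) atTop (𝓝 1) := by
    have := tendsto_const_nhds (x := (1 : ℝ)).add (tendsto_const_div_atTop_nhds_zero_nat (m : ℝ))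
    rw [add_zero] at this
    refine this.congr' ?_
    filter_upwards [eventually_ne_atTop 0] with N hN
    field_simp
  have hshift : Tendsto (fun N => cesaroMean f (N + m)) atTop (𝓝 l) :=
    h.comp (tendsto_add_atTop_nat m)
  have := (hratio.mul hshift).sub (tendsto_const_div_atTop_nhds_zero_nat (∑ n ∈ Icc 1 m, f n))
  rw [one_mul, sub_zero] at this
  refine this.congr' ?_
  filter_upwards [eventually_ne_atTop 0] with N hN
  rw [cesaroMean_comp_add f m hN]

theorem tendsto_cesaroMean_const (c : ℝ) : Tendsto (cesaroMean fun _ => c) atTop (𝓝 c) := by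
  refine tendsto_const_nhds.congr' ?_
  filter_upwards [eventually_ne_atTop 0] with N hN
  simp [cesaroMean, hN]

theorem cesaroMean_sum_mul {ι : Type*} (s : Finset ι) (c : ι → ℝ) (g : ι → ℕ → ℝ) (N : ℕ) :
    cesaroMean (fun n => ∑ t ∈ s, c t * g t n) N = ∑ t ∈ s, c t * cesaroMean (g t) N := by
  simp only [cesaroMean, sum_comm (s := Icc 1 N), mul_sum]
  exact sum_congr rfl fun t _ => sum_congr rfl fun n _ => by ring

theorem tendsto_cesaroMean_sum_mul {ι : Type*} (s : Finset ι) (c : ι → ℝ) {g : ι → ℕ → ℝ}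
    {l : ι → ℝ} (h : ∀ t ∈ s, Tendsto (cesaroMean (g t)) atTop (𝓝 (l t))) :
    Tendsto (cesaroMean fun n => ∑ t ∈ s, c t * g t n) atTop (𝓝 (∑ t ∈ s, c t * l t)) := by
  simp_rw [funext (cesaroMean_sum_mul s c g)]
  exact tendsto_finsetSum s fun t ht => (h t ht).const_mul (c t)

theorem card_filter_Icc_div_eq_cesaroMean (p : ℕ → Prop) [DecidablePred p] (N : ℕ) :
    ((filter p (Icc 1 N)).card : ℝ) / N = cesaroMean (fun n => if p n then 1 else 0) N := by
  rw [cesaroMean, sum_boole, one_div_mul_eq_div]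

def boolSign (b : Bool) : ℝ := if b then 1 else -1

theorem sum_boolSign : ∑ b : Bool, boolSign b = 0 := by
  simp [boolSign]

theorem chi_eq_boolSign (A : Set ℕ) (n : ℕ) : chi A n = boolSign (decide (n ∈ A)) := by
  by_cases h : n ∈ A <;> simp [chi, boolSign, h]

def wordIndicator (A : Set ℕ) {k : ℕ} (w : Fin k → Bool) (n : ℕ) : ℝ :=
  if ∀ i : Fin k, (n + i ∈ A ↔ w i = true) then 1 else 0

def correlation (A : Set ℕ) (S : Finset ℕ) (n : ℕ) : ℝ := ∏ x ∈ S, chi A (n + x)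

theorem wordIndicator_eq_ite (A : Set ℕ) {k : ℕ} (w : Fin k → Bool) (n : ℕ) :
    wordIndicator A w n = if (fun i : Fin k => decide (n + i ∈ A)) = w then 1 else 0 := by
  simp only [wordIndicator, funext_iff]
  congr! 3 with i
  cases w i <;> simp

theorem ite_mem_iff_eq_one_add_boolSign_mul_chi_div_two (A : Set ℕ) (m : ℕ) (b : Bool) :
    (if (m ∈ A ↔ b = true) then (1 : ℝ) else 0) = (1 + boolSign b * chi A m) / 2 := by
  by_cases h : m ∈ A <;> cases b <;> norm_num [chi, boolSign, h]

theorem wordIndicator_eq_sum_correlation (A : Set ℕ) {k : ℕ} (w : Fin k → Bool) (n : ℕ) :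
    wordIndicator A w n = ∑ t ∈ (univ : Finset (Fin k)).powerset,
      (∏ i ∈ t, boolSign (w i)) / 2 ^ k * correlation A (t.map Fin.valEmbedding) n := by
  calc wordIndicator A w n
      = ∏ i : Fin k, if (n + i ∈ A ↔ w i = true) then (1 : ℝ) else 0 := by
        rw [Fintype.prod_boole, wordIndicator]
        congr
    _ = ∏ i : Fin k, (1 + boolSign (w i) * chi A (n + i)) / 2 :=
        prod_congr rfl fun i _ => ite_mem_iff_eq_one_add_boolSign_mul_chi_div_two A _ _
    _ = (∑ t ∈ (univ : Finset (Fin k)).powerset, ∏ i ∈ t, boolSign (w i) * chi A (n + i)) /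
          2 ^ k := by
        rw [prod_div_distrib, prod_one_add, prod_const, card_univ, Fintype.card_fin]
    _ = _ := by
        simp only [sum_div, correlation, prod_map, Fin.valEmbedding_apply, prod_mul_distrib]
        exact sum_congr rfl fun t _ => by ring

theorem correlation_eq_sum_wordIndicator (A : Set ℕ) {S : Finset ℕ} {L : ℕ} (hS : S ⊆ range L)
    (n : ℕ) :
    correlation A S n = ∑ w : Fin L → Bool,
      (∏ j : Fin L, if (j : ℕ) ∈ S then boolSign (w j) else 1) * wordIndicator A w n := by
  simp only [wordIndicator_eq_ite, mul_ite, mul_one, mul_zero, sum_ite_eq, mem_univ, if_true]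
  rw [Fin.prod_univ_eq_prod_range (fun j => if j ∈ S then boolSign (decide (n + j ∈ A)) else 1),
    prod_ite_mem, inter_eq_right.mpr hS]
  simp only [correlation, chi_eq_boolSign]

theorem sum_prod_boolSign_eq_zero {S : Finset ℕ} {L : ℕ} (hS : S ⊆ range L) (hne : S.Nonempty) :
    ∑ w : Fin L → Bool, ∏ j : Fin L, (if (j : ℕ) ∈ S then boolSign (w j) else 1) = 0 := by
  obtain ⟨x, hx⟩ := hne
  rw [← Fintype.prod_sum fun (j : Fin L) (b : Bool) => if (j : ℕ) ∈ S then boolSign b else 1]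
  refine prod_eq_zero (i := ⟨x, mem_range.mp (hS hx)⟩) (mem_univ _) ?_
  simp only [hx, if_true, sum_boolSign]

theorem isNormalSet_iff_tendsto_cesaroMean_wordIndicator (A : Set ℕ) :
    IsNormalSet A ↔ ∀ k : ℕ, 1 ≤ k → ∀ w : Fin k → Bool,
      Tendsto (cesaroMean (wordIndicator A w)) atTop (𝓝 (1 / 2 ^ k)) := by
  simp only [IsNormalSet, card_filter_Icc_div_eq_cesaroMean]
  rfl

theorem correlation_empty (A : Set ℕ) : correlation A ∅ = fun _ => 1 :=
  funext fun _ => prod_empty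

theorem IsNormalSet.tendsto_cesaroMean_correlation {A : Set ℕ} (hA : IsNormalSet A)
    {S : Finset ℕ} (hS : S.Nonempty) : Tendsto (cesaroMean (correlation A S)) atTop (𝓝 0) := by
  set L := S.max' hS + 1
  have hSL : S ⊆ range L := fun x hx => mem_range_succ_iff.mpr (S.le_max' x hx)
  have h := tendsto_cesaroMean_sum_mul univ
    (fun w : Fin L → Bool => ∏ j : Fin L, if (j : ℕ) ∈ S then boolSign (w j) else 1)
    fun w _ =>
      (isNormalSet_iff_tendsto_cesaroMean_wordIndicator A).mp hA L (Nat.le_add_left 1 _) w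
  rwa [← sum_mul, sum_prod_boolSign_eq_zero hSL hS, zero_mul,
    ← funext (correlation_eq_sum_wordIndicator A hSL)] at h

theorem isNormalSet_of_tendsto_cesaroMean_correlation {A : Set ℕ}
    (h : ∀ S : Finset ℕ, S.Nonempty → Tendsto (cesaroMean (correlation A S)) atTop (𝓝 0)) :
    IsNormalSet A := by
  refine (isNormalSet_iff_tendsto_cesaroMean_wordIndicator A).mpr fun k _ w => ?_
  have hlim : ∀ t ∈ (univ : Finset (Fin k)).powerset, Tendsto
      (cesaroMean (correlation A (t.map Fin.valEmbedding))) atTop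
      (𝓝 (if t = ∅ then 1 else 0)) := by
    intro t _
    split_ifs with ht
    · simpa [ht, correlation_empty] using tendsto_cesaroMean_const 1
    · exact h _ (map_nonempty.mpr (nonempty_iff_ne_empty.mpr ht))
  have h := tendsto_cesaroMean_sum_mul _ (fun t => (∏ i ∈ t, boolSign (w i)) / 2 ^ k) hlim
  rw [← funext (wordIndicator_eq_sum_correlation A w)] at h
  simpa using h

theorem correlation_insert_zero_image (A : Set ℕ) {k : ℕ} {i : Fin k → ℕ} (hi : StrictMono i)
    (hpos : ∀ j, 0 < i j) :
    correlation A (insert 0 (univ.image i)) = fun n => chi A n * ∏ j, chi A (n + i j) := by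
  have h0 : 0 ∉ univ.image i := by simpa using fun j => (hpos j).ne'
  funext n
  rw [correlation, prod_insert h0, prod_image hi.injective.injOn, add_zero]

theorem correlation_map_addRightEmbedding (A : Set ℕ) (S : Finset ℕ) (m : ℕ) :
    correlation A (S.map (addRightEmbedding m)) = fun n => correlation A S (n + m) := by
  funext n
  rw [correlation, correlation, prod_map]
  exact prod_congr rfl fun x _ => by rw [addRightEmbedding_apply, add_comm x m, add_assoc]

theorem map_addRightEmbedding_image_sub_min' {S : Finset ℕ} (hS : S.Nonempty) :
    (S.image (· - S.min' hS)).map (addRightEmbedding (S.min' hS)) = S := by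
  rw [map_eq_image, image_image]
  exact (image_congr fun x hx => Nat.sub_add_cancel (S.min'_le x hx)).trans image_id

theorem tendsto_cesaroMean_correlation_iff_strictMono (A : Set ℕ) :
    (∀ k : ℕ, ∀ i : Fin k → ℕ, StrictMono i → (∀ j, 0 < i j) →
      Tendsto (cesaroMean fun n => chi A n * ∏ j, chi A (n + i j)) atTop (𝓝 0)) ↔
    ∀ S : Finset ℕ, S.Nonempty → Tendsto (cesaroMean (correlation A S)) atTop (𝓝 0) := by
  refine ⟨fun h S hS => ?_, fun h k i hi hpos => ?_⟩
  · have hzero : ∀ T : Finset ℕ, 0 ∈ T → Tendsto (cesaroMean (correlation A T)) atTop (𝓝 0) := by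
      intro T hT
      set e := (T.erase 0).orderEmbOfFin rfl
      have hpos : ∀ j, 0 < e j := fun j =>
        Nat.pos_of_ne_zero (ne_of_mem_erase ((T.erase 0).orderEmbOfFin_mem rfl j))
      have hT_eq := correlation_insert_zero_image A e.strictMono hpos
      rw [image_orderEmbOfFin_univ, insert_erase hT] at hT_eq
      rw [hT_eq]
      exact h _ e e.strictMono hpos
    have hshift := tendsto_cesaroMean_comp_add (hzero (S.image (· - S.min' hS))
      (mem_image.mpr ⟨_, S.min'_mem hS, Nat.sub_self _⟩)) (S.min' hS)
    rwa [← correlation_map_addRightEmbedding, map_addRightEmbedding_image_sub_min'] at hshift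
  · rw [← correlation_insert_zero_image A hi hpos]
    exact h _ (insert_nonempty _ _)

/-- A is normal iff all correlation averages of χ_A along distinct shifts vanish. -/
theorem isNormalSet_iff_correlations_vanish (A : Set ℕ) :
    IsNormalSet A ↔
      ∀ k : ℕ, ∀ i : Fin k → ℕ, StrictMono i → (∀ j, 0 < i j) →
        Tendsto (fun N : ℕ =>
            (1 / (N : ℝ)) * ∑ n ∈ Finset.Icc 1 N,
              chi A n * ∏ j : Fin k, chi A (n + i j))
          atTop (nhds 0) :=
  ⟨fun hA => (tendsto_cesaroMean_correlation_iff_strictMono A).mpr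
      fun _ => hA.tendsto_cesaroMean_correlation,
    fun h => isNormalSet_of_tendsto_cesaroMean_correlation
      ((tendsto_cesaroMean_correlation_iff_strictMono A).mp h)⟩

end
end

section
/- Let {a_n} be a bounded sequence of real numbers and let T_N = (1/N)·Σ_{n=1}^{N} a_n. Then T_N converges to a limit t as N → ∞ if and only if there exists a strictly increasing sequence of indices {N_i} such that N_i / N_{i+1} → 1 as i → ∞ and T_{N_i} → t as i → ∞. -/
/-!
For `m ≤ n`, `n T_n - m T_m` is a sum of `n - m` terms bounded by `C`, so
`|T_n - T_m| ≤ 2C (1 - m/n)`. Every large `n` lies in a gap `N_i ≤ n < N_{i+1}`, where this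
bound is at most `2C (1 - N_i/N_{i+1}) → 0`; hence `T_n` follows `T_{N_i}`.
-/

open Filter Topology Finset

noncomputable def cesaroAverage (a : ℕ → ℝ) (N : ℕ) : ℝ :=
  (1 / (N : ℝ)) * ∑ n ∈ Icc 1 N, a n

theorem StrictMono.exists_bracket {f : ℕ → ℕ} (hf : StrictMono f) :
    ∃ φ : ℕ → ℕ, Tendsto φ atTop atTop ∧
      ∀ n, f 0 ≤ n → f (φ n) ≤ n ∧ n < f (φ n + 1) := by
  refine ⟨fun n => Nat.findGreatest (f · ≤ n) n, tendsto_atTop_atTop.2 fun k =>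
    ⟨f k, fun n hn => Nat.le_findGreatest (hf.le_apply.trans hn) hn⟩, fun n hn =>
    ⟨Nat.findGreatest_spec (P := (f · ≤ n)) n.zero_le hn, ?_⟩⟩
  by_contra! h
  have := Nat.le_findGreatest (P := (f · ≤ n)) (hf.le_apply.trans h) h
  omega

theorem natCast_mul_cesaroAverage (a : ℕ → ℝ) (N : ℕ) :
    (N : ℝ) * cesaroAverage a N = ∑ n ∈ Ioc 0 N, a n := by
  rw [← Icc_add_one_left_eq_Ioc, zero_add]
  rcases N.eq_zero_or_pos with rfl | hN
  · simp
  · rw [cesaroAverage, ← mul_assoc, mul_one_div_cancel (by positivity), one_mul]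

section Cesaro

variable {a : ℕ → ℝ} {C : ℝ}

theorem abs_sum_Ioc_le (hC : ∀ n, |a n| ≤ C) {m n : ℕ} (hmn : m ≤ n) :
    |∑ k ∈ Ioc m n, a k| ≤ C * (n - m) := by
  calc |∑ k ∈ Ioc m n, a k| ≤ ∑ k ∈ Ioc m n, |a k| := abs_sum_le_sum_abs _ _
    _ ≤ #(Ioc m n) • C := sum_le_card_nsmul _ _ _ fun k _ => hC k
    _ = C * (n - m) := by rw [Nat.card_Ioc, nsmul_eq_mul, Nat.cast_sub hmn, mul_comm]

theorem abs_cesaroAverage_le (hC : ∀ n, |a n| ≤ C) (N : ℕ) : |cesaroAverage a N| ≤ C := by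
  rcases N.eq_zero_or_pos with rfl | hN
  · simpa [cesaroAverage] using (abs_nonneg _).trans (hC 0)
  · have hN' : (0 : ℝ) < N := by exact_mod_cast hN
    rw [← mul_le_mul_iff_of_pos_left hN', ← abs_of_pos hN', ← abs_mul, abs_of_pos hN',
      natCast_mul_cesaroAverage, mul_comm]
    simpa using abs_sum_Ioc_le hC N.zero_le

theorem abs_cesaroAverage_sub_le (hC : ∀ n, |a n| ≤ C) {m n : ℕ} (hmn : m ≤ n) :
    |cesaroAverage a n - cesaroAverage a m| ≤ 2 * C * (1 - m / n) := by
  rcases n.eq_zero_or_pos with rfl | hn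
  · obtain rfl : m = 0 := Nat.le_zero.1 hmn
    simpa using (abs_nonneg _).trans (hC 0)
  have hn' : (0 : ℝ) < n := by exact_mod_cast hn
  have hsplit : cesaroAverage a n - cesaroAverage a m
      = (∑ k ∈ Ioc m n, a k) / n - (1 - m / n) * cesaroAverage a m := by
    have h := natCast_mul_cesaroAverage a n
    rw [← sum_Ioc_consecutive a m.zero_le hmn, ← natCast_mul_cesaroAverage] at h
    field_simp
    linarith
  have hfrac : 0 ≤ 1 - (m : ℝ) / n := by rw [sub_nonneg, div_le_one hn']; exact_mod_cast hmn
  calc |cesaroAverage a n - cesaroAverage a m|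
      ≤ |∑ k ∈ Ioc m n, a k| / n + (1 - m / n) * |cesaroAverage a m| := by
        rw [hsplit]
        refine (abs_sub _ _).trans_eq ?_
        rw [abs_div, abs_mul, abs_of_pos hn', abs_of_nonneg hfrac]
    _ ≤ C * (n - m) / n + (1 - m / n) * C := by
        gcongr
        · exact abs_sum_Ioc_le hC hmn
        · exact abs_cesaroAverage_le hC m
    _ = 2 * C * (1 - m / n) := by field_simp; ring

theorem tendsto_cesaroAverage_of_tendsto_comp {t : ℝ} (hC : ∀ n, |a n| ≤ C)
    {N : ℕ → ℕ} (hN : StrictMono N)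
    (hratio : Tendsto (fun i => (N i : ℝ) / N (i + 1)) atTop (𝓝 1))
    (hT : Tendsto (cesaroAverage a ∘ N) atTop (𝓝 t)) :
    Tendsto (cesaroAverage a) atTop (𝓝 t) := by
  obtain ⟨φ, hφ, hbracket⟩ := hN.exists_bracket
  have hC0 : 0 ≤ C := (abs_nonneg _).trans (hC 0)
  have hbound :
      Tendsto (fun n => 2 * C * (1 - (N (φ n) : ℝ) / N (φ n + 1))) atTop (𝓝 0) := by
    simpa using ((hratio.comp hφ).const_sub 1).const_mul (2 * C)
  have hgap : Tendsto (fun n => cesaroAverage a n - cesaroAverage a (N (φ n))) atTop (𝓝 0) := by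
    refine squeeze_zero_norm' ?_ hbound
    filter_upwards [eventually_ge_atTop (max (N 0) 1)] with n hn
    obtain ⟨hlo, hhi⟩ := hbracket n (le_of_max_le_left hn)
    have hn' : (0 : ℝ) < n := by exact_mod_cast le_of_max_le_right hn
    refine (abs_cesaroAverage_sub_le hC hlo).trans ?_
    gcongr
  simpa using (hT.comp hφ).add hgap

end Cesaro

/-- Cesàro averages of a bounded sequence converge to t iff they converge to t
along a strictly increasing sequence of indices N_i with N_i/N_{i+1} → 1. -/
theorem cesaro_limit_iff_sparse_subsequence (a : ℕ → ℝ) (C : ℝ)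
    (hC : ∀ n, |a n| ≤ C) (t : ℝ) :
    Tendsto (fun N : ℕ => (1 / (N : ℝ)) * ∑ n ∈ Finset.Icc 1 N, a n)
        atTop (nhds t) ↔
      ∃ Nseq : ℕ → ℕ, StrictMono Nseq ∧
        Tendsto (fun i : ℕ => (Nseq i : ℝ) / (Nseq (i + 1) : ℝ)) atTop (nhds 1) ∧
        Tendsto (fun i : ℕ =>
            (1 / (Nseq i : ℝ)) * ∑ n ∈ Finset.Icc 1 (Nseq i), a n)
          atTop (nhds t) := by
  change Tendsto (cesaroAverage a) _ _ ↔ ∃ N, _ ∧ _ ∧ Tendsto (cesaroAverage a ∘ N) _ _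
  refine ⟨fun h => ⟨(· + 1), strictMono_id.add_const 1, ?_,
    h.comp (tendsto_add_atTop_nat 1)⟩,
    fun ⟨N, hN, hratio, hT⟩ => tendsto_cesaroAverage_of_tendsto_comp hC hN hratio hT⟩
  convert (tendsto_natCast_div_add_atTop (1 : ℝ)).comp (tendsto_add_atTop_nat 1) using 2
  simp
end

section
/- Let α be an irrational real number and let S = { n ∈ ℕ : the fractional part of n·α lies in the interval [1/3, 7/12] }. Then the equation x + y = z is not solvable within S: there are no x, y, z ∈ S with x + y = z. -/
/-- For irrational α, the set S = { n ∈ ℕ : {n·α} ∈ [1/3, 7/12] } contains no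
solution of x + y = z. -/
theorem no_schur_in_totally_ergodic_example (α : ℝ) (hα : Irrational α) :
    ¬ ∃ x y z : ℕ,
        Int.fract ((x : ℝ) * α) ∈ Set.Icc (1/3 : ℝ) (7/12) ∧
        Int.fract ((y : ℝ) * α) ∈ Set.Icc (1/3 : ℝ) (7/12) ∧
        Int.fract ((z : ℝ) * α) ∈ Set.Icc (1/3 : ℝ) (7/12) ∧
        x + y = z := by
  rintro ⟨x, y, z, ⟨hx1, hx2⟩, ⟨hy1, hy2⟩, ⟨hz1, hz2⟩, hxyz⟩
  have hz : ((z : ℝ)) * α = (x : ℝ) * α + (y : ℝ) * α := by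
    rw [← hxyz]; push_cast; ring
  have key : Int.fract ((z : ℝ) * α)
      = Int.fract (Int.fract ((x : ℝ) * α) + Int.fract ((y : ℝ) * α)) := by
    rw [hz, show (x:ℝ)*α + (y:ℝ)*α
        = (Int.fract ((x:ℝ)*α) + Int.fract ((y:ℝ)*α)) + ((⌊(x:ℝ)*α⌋ + ⌊(y:ℝ)*α⌋ : ℤ) : ℝ) from by
          push_cast [Int.fract]; ring, Int.fract_add_intCast]
  set a := Int.fract ((x : ℝ) * α)
  set b := Int.fract ((y : ℝ) * α)
  by_cases h : a + b < 1
  · have : Int.fract (a + b) = a + b := Int.fract_eq_self.2 ⟨by linarith, h⟩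
    rw [key, this] at hz2
    linarith
  · have h1 : a + b - 1 < 1 := by linarith
    have : Int.fract (a + b) = a + b - 1 := by
      have := Int.fract_eq_self.2 (⟨by linarith, h1⟩ : 0 ≤ a + b - 1 ∧ a + b - 1 < 1)
      calc Int.fract (a + b) = Int.fract (a + b - 1) := (Int.fract_sub_one _).symm
        _ = a + b - 1 := this
    rw [key, this] at hz1
    linarith
end
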